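/- arXiv:1910.10612 — 2 statements merged into one kernel-verified Lean document; each statement's English description precedes it below -/
import Mathlib

section
/- Let G be a finite simple graph on the vertex set {1,…,n}. For every vertex v, the rank over F_2 of X(μ_v(G)) equals the rank over F_2 of X(G). -/
open Classical Finset

noncomputable section

/-- The mutation `μ_v(G)` of a graph `G` at a vertex `v`: edges not incident to `v`
are those of `G`; edges incident to `v` are the pairs `vw` with `w ≠ v`, `w ∉ N_G(v)`. -/
def mutation {V : Type*} (G : SimpleGraph V) (v : V) : SimpleGraph V where
  Adj x y := x ≠ y ∧
    ((x = v ∧ ¬ G.Adj v y) ∨ (y = v ∧ ¬ G.Adj v x) ∨ (x ≠ v ∧ y ≠ v ∧ G.Adj x y))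
  symm := by
    constructor
    rintro x y ⟨hxy, h | h | ⟨h1, h2, h3⟩⟩
    · exact ⟨hxy.symm, Or.inr (Or.inl h)⟩
    · exact ⟨hxy.symm, Or.inl h⟩
    · exact ⟨hxy.symm, Or.inr (Or.inr ⟨h2, h1, h3.symm⟩)⟩
  loopless := by
    constructor
    rintro x ⟨hxx, -⟩
    exact hxx rfl

/-- The relative mutation `μ_{v←u}(G)` of `G` at `v` with respect to `u`: edges not
incident to `v` are those of `G`; edges incident to `v` are the pairs `vw` with
`w ≠ v` and `w` in the symmetric difference `N_G(u) Δ N_G(v)`. -/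
def relMutation {V : Type*} (G : SimpleGraph V) (v u : V) : SimpleGraph V where
  Adj x y := x ≠ y ∧
    ((x = v ∧ (G.Adj u y ↔ ¬ G.Adj v y)) ∨ (y = v ∧ (G.Adj u x ↔ ¬ G.Adj v x)) ∨
      (x ≠ v ∧ y ≠ v ∧ G.Adj x y))
  symm := by
    constructor
    rintro x y ⟨hxy, h | h | ⟨h1, h2, h3⟩⟩
    · exact ⟨hxy.symm, Or.inr (Or.inl h)⟩
    · exact ⟨hxy.symm, Or.inl h⟩
    · exact ⟨hxy.symm, Or.inr (Or.inr ⟨h2, h1, h3.symm⟩)⟩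
  loopless := by
    constructor
    rintro x ⟨hxx, -⟩
    exact hxx rfl

/-- A vertex is isolated if it has no neighbors. -/
def isIsolated {V : Type*} (G : SimpleGraph V) (v : V) : Prop := ∀ w, ¬ G.Adj v w

/-- `pairGraph a b` is the graph `G(a,b)` on `2a+b` vertices consisting of `a`
pairwise disjoint edges `{0,1}, {2,3}, …` together with `b` isolated vertices. -/
def pairGraph (a b : ℕ) : SimpleGraph (Fin (2 * a + b)) where
  Adj x y := x ≠ y ∧ (x : ℕ) / 2 = (y : ℕ) / 2 ∧ (x : ℕ) < 2 * a
  symm := by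
    constructor
    rintro x y ⟨h1, h2, h3⟩
    exact ⟨h1.symm, h2.symm, by omega⟩
  loopless := by
    constructor
    rintro x ⟨hxx, -⟩
    exact hxx rfl

/-- The adjacency matrix `M(G)` of `G`, over `F_2`. -/
def adjMat {n : ℕ} (G : SimpleGraph (Fin n)) : Matrix (Fin n) (Fin n) (ZMod 2) :=
  fun i j => if G.Adj i j then 1 else 0

/-- The matrix `X(G)` over `F_2`: upper-left `n×n` block is `M(G)`, and the last row
and column consist entirely of `1`'s except for the `(n+1, n+1)` entry, which is `0`. -/
def Xmat {n : ℕ} (G : SimpleGraph (Fin n)) :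
    Matrix (Fin (n + 1)) (Fin (n + 1)) (ZMod 2) :=
  fun i j =>
    if hi : (i : ℕ) < n then
      if hj : (j : ℕ) < n then adjMat G ⟨i, hi⟩ ⟨j, hj⟩ else 1
    else if (j : ℕ) < n then 1 else 0

/-- Finite simple graphs on vertex sets `{1, …, n}`, bundled with `n`. -/
abbrev GraphOn := Σ n : ℕ, SimpleGraph (Fin n)

/-- One move: either pass to an isomorphic graph, or apply a mutation `μ_v`, or apply a
relative mutation `μ_{v←w}` to a graph containing an isolated vertex `u ∉ {v, w}`. -/
inductive MoveStep : GraphOn → GraphOn → Prop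
  | iso {n m : ℕ} (G : SimpleGraph (Fin n)) (H : SimpleGraph (Fin m)) :
      Nonempty (G ≃g H) → MoveStep ⟨n, G⟩ ⟨m, H⟩
  | mut {n : ℕ} (G : SimpleGraph (Fin n)) (v : Fin n) :
      MoveStep ⟨n, G⟩ ⟨n, mutation G v⟩
  | relMut {n : ℕ} (G : SimpleGraph (Fin n)) (v w u : Fin n) :
      v ≠ w → u ≠ v → u ≠ w → isIsolated G u →
      MoveStep ⟨n, G⟩ ⟨n, relMutation G v w⟩

/-- `G ≈ G'`: `G'` is obtained from `G`, up to graph isomorphism, by a finite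
sequence of mutations and relative mutations (the latter in the presence of an
isolated vertex distinct from the two vertices involved). -/
def graphEquiv (A B : GraphOn) : Prop := Relation.ReflTransGen MoveStep A B

/-- The induced subgraph of `G` on `{i, j, k}` has an even number of edges. -/
def evenTriple {V : Type*} (G : SimpleGraph V) (i j k : V) : Prop :=
  Even ((if G.Adj i j then 1 else 0) + (if G.Adj i k then 1 else 0) +
    (if G.Adj j k then 1 else 0) : ℕ)

/-- `ℓ(G)`: the number of 2-element subsets `{i, j}` (encoded as pairs `i < j`) such
that for every vertex `k ∉ {i, j}` the induced subgraph of `G` on `{i, j, k}` has an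
even number of edges. -/
def ell {n : ℕ} (G : SimpleGraph (Fin n)) : ℕ :=
  ((univ : Finset (Fin n × Fin n)).filter
    (fun p => p.1 < p.2 ∧ ∀ k, k ≠ p.1 → k ≠ p.2 → evenTriple G p.1 p.2 k)).card

/-- `J(G)`: the set of 2-element subsets `{i, j}` (encoded as pairs `i < j`) with
`N_G(i) = N_G(j) ≠ ∅`. -/
def Jfinset {n : ℕ} (G : SimpleGraph (Fin n)) : Finset (Fin n × Fin n) :=
  (univ : Finset (Fin n × Fin n)).filter
    (fun p => p.1 < p.2 ∧ G.neighborSet p.1 = G.neighborSet p.2 ∧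
      G.neighborSet p.1 ≠ ∅)

/-- `j(G) = #J(G)`. -/
def jnum {n : ℕ} (G : SimpleGraph (Fin n)) : ℕ := (Jfinset G).card

/-- `i(G)`: the number of isolated vertices of `G`. -/
def numIso {n : ℕ} (G : SimpleGraph (Fin n)) : ℕ :=
  ((univ : Finset (Fin n)).filter (fun v => isIsolated G v)).card

end

/-! The border row of `X(G)` is `(1, …, 1, 0)`. Adding it to row `v` complements the
adjacencies of `v`, and adding the border column to column `v` afterwards does the same
for the column while restoring the zero diagonal entry. Hence `X(μ_v G) = T X(G) Tᵀ` for an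
elementary transvection `T`, and congruence by an invertible matrix preserves rank. -/

open Matrix

section Mutation

variable {V : Type*} (G : SimpleGraph V) {v x y : V}

theorem mutation_adj_of_ne (hx : x ≠ v) (hy : y ≠ v) : (mutation G v).Adj x y ↔ G.Adj x y := by
  simp only [mutation, ne_eq, hx, hy, false_and, false_or, not_false_eq_true, true_and,
    and_iff_right_iff_imp]
  exact G.ne_of_adj

theorem mutation_adj_left (hy : y ≠ v) : (mutation G v).Adj v y ↔ ¬ G.Adj v y := by
  simp [mutation, hy, hy.symm]

theorem mutation_adj_right (hx : x ≠ v) : (mutation G v).Adj x v ↔ ¬ G.Adj x v := by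
  rw [SimpleGraph.adj_comm, G.adj_comm, mutation_adj_left G hx]

end Mutation

theorem ite_not_zmod_two (p : Prop) [Decidable p] :
    (if ¬ p then (1 : ZMod 2) else 0) = (if p then 1 else 0) + 1 := by
  split_ifs <;> decide

section Matrices

variable {n : ℕ} (G : SimpleGraph (Fin n)) {v i j : Fin n}

@[simp]
theorem adjMat_self (i : Fin n) : adjMat G i i = 0 := by
  simp [adjMat]

theorem adjMat_mutation_of_ne (hi : i ≠ v) (hj : j ≠ v) :
    adjMat (mutation G v) i j = adjMat G i j := by
  simp only [adjMat, mutation_adj_of_ne G hi hj]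

theorem adjMat_mutation_left (hj : j ≠ v) :
    adjMat (mutation G v) v j = adjMat G v j + 1 := by
  simp only [adjMat, mutation_adj_left G hj, ite_not_zmod_two]

theorem adjMat_mutation_right (hi : i ≠ v) :
    adjMat (mutation G v) i v = adjMat G i v + 1 := by
  simp only [adjMat, mutation_adj_right G hi, ite_not_zmod_two]

@[simp]
theorem Xmat_castSucc_castSucc (i j : Fin n) : Xmat G i.castSucc j.castSucc = adjMat G i j := by
  simp [Xmat]

@[simp]
theorem Xmat_castSucc_last (i : Fin n) : Xmat G i.castSucc (Fin.last n) = 1 := by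
  simp [Xmat]

@[simp]
theorem Xmat_last_castSucc (j : Fin n) : Xmat G (Fin.last n) j.castSucc = 1 := by
  simp [Xmat]

@[simp]
theorem Xmat_last_last : Xmat G (Fin.last n) (Fin.last n) = 0 := by
  simp [Xmat]

theorem Xmat_mutation :
    Xmat (mutation G v) = transvection v.castSucc (Fin.last n) 1 * Xmat G *
      transvection (Fin.last n) v.castSucc 1 := by
  have hlast : ∀ k : Fin n, Fin.last n ≠ k.castSucc := fun k => (Fin.castSucc_ne_last k).symm
  ext a b
  induction a using Fin.lastCases with
  | last =>
    induction b using Fin.lastCases with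
    | last => simp [hlast]
    | cast j =>
      by_cases hj : j = v
      · subst hj; simp [hlast]
      · simp [hlast, hj]
  | cast i =>
    induction b using Fin.lastCases with
    | last =>
      by_cases hi : i = v
      · subst hi; simp [hlast]
      · simp [hlast, hi]
    | cast j =>
      by_cases hi : i = v <;> by_cases hj : j = v
      · subst hi hj; simp [CharTwo.add_self_eq_zero]
      · subst hi; simp [hj, adjMat_mutation_left]
      · subst hj; simp [hi, adjMat_mutation_right]
      · simp [hi, hj, adjMat_mutation_of_ne]

end Matrices

/-- mutation preserves the rank of `X(G)` over `F_2`. -/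
theorem stmt_6 {n : ℕ} (G : SimpleGraph (Fin n)) (v : Fin n) :
    (Xmat (mutation G v)).rank = (Xmat G).rank := by
  have hne := Fin.castSucc_ne_last v
  rw [Xmat_mutation, rank_mul_eq_left_of_isUnit_det _ _ (by simp [hne.symm]),
    rank_mul_eq_right_of_isUnit_det _ _ (by simp [hne])]
end

section
/- Let G be a finite simple graph on the vertex set {1,…,n} containing an isolated vertex u, and let v, w be distinct vertices with u ∉ {v,w}. Then the rank over F_2 of X(μ_{v←w}(G)) equals the rank over F_2 of X(G). -/
open Classical Finset

/-!
Adjoining an apex joined to every vertex turns `X(G)` into the adjacency matrix of the cone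
over `G`. Over `𝔽₂`, the adjacency matrix of `μ_{v←w}(H)` is obtained from that of `H` by adding
row `w` to row `v` and column `w` to column `v`, a congruence by a transvection, so relative
mutation never changes the rank of an adjacency matrix. On the cone, however, `μ_{v←w}`
disconnects `v` from the apex; a second relative mutation `μ_{v←u}` with respect to the
isolated vertex `u`, whose only neighbour in the cone is the apex, reconnects it, and the result
is the cone over `μ_{v←w}(G)`.
-/

open Matrix

theorem Matrix.rank_transvection_mul_mul_transvection {m R : Type*} [Fintype m]
    [DecidableEq m] [CommRing R] {i j : m} (hij : i ≠ j) (c d : R) (A : Matrix m m R) :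
    (transvection i j c * A * transvection j i d).rank = A.rank := by
  rw [rank_mul_eq_left_of_isUnit_det _ _ (by simp [hij.symm]),
    rank_mul_eq_right_of_isUnit_det _ _ (by simp [hij])]

lemma CharTwo.ite_iff_not {R : Type*} [Ring R] [CharP R 2] (p q : Prop) [Decidable p]
    [Decidable q] :
    (if (p ↔ ¬ q) then 1 else 0 : R) = (if q then 1 else 0) + (if p then 1 else 0) := by
  by_cases hp : p <;> by_cases hq : q <;> simp [hp, hq, CharTwo.add_self_eq_zero]

lemma adjMat_relMutation {n : ℕ} (G : SimpleGraph (Fin n)) (v w : Fin n) :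
    adjMat (relMutation G v w) =
      transvection v w 1 * adjMat G * transvection w v 1 := by
  ext a b
  by_cases ha : a = v <;> by_cases hb : b = v
  · subst ha hb
    simp [adjMat, relMutation, G.adj_comm b w, CharTwo.add_self_eq_zero]
  · subst ha
    simp [hb, Ne.symm hb, relMutation, adjMat, CharTwo.ite_iff_not]
  · subst hb
    simp [ha, relMutation, adjMat, CharTwo.ite_iff_not, G.adj_comm]
  · simp [ha, hb, relMutation, adjMat, and_iff_right_of_imp G.ne_of_adj]

lemma rank_adjMat_relMutation {n : ℕ} (G : SimpleGraph (Fin n)) {v w : Fin n} (hvw : v ≠ w) :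
    (adjMat (relMutation G v w)).rank = (adjMat G).rank := by
  rw [adjMat_relMutation, rank_transvection_mul_mul_transvection hvw]

def cone {n : ℕ} (G : SimpleGraph (Fin n)) : SimpleGraph (Fin (n + 1)) :=
  G.map Fin.castSucc ⊔ SimpleGraph.fromRel fun _ y => y = Fin.last n

section cone

variable {n : ℕ} (G : SimpleGraph (Fin n))

@[simp]
lemma cone_adj_castSucc_castSucc (i j : Fin n) :
    (cone G).Adj i.castSucc j.castSucc ↔ G.Adj i j := by
  simp [cone, SimpleGraph.map_adj', and_iff_right_of_imp G.ne_of_adj, Fin.castSucc_ne_last]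

@[simp]
lemma cone_adj_castSucc_last (i : Fin n) : (cone G).Adj i.castSucc (Fin.last n) := by
  simp [cone, Fin.castSucc_ne_last]

@[simp]
lemma cone_adj_last_castSucc (i : Fin n) : (cone G).Adj (Fin.last n) i.castSucc :=
  (cone_adj_castSucc_last G i).symm

lemma Xmat_eq_adjMat_cone : Xmat G = adjMat (cone G) := by
  ext a b
  cases a using Fin.lastCases <;> cases b using Fin.lastCases <;> simp [Xmat, adjMat]

lemma cone_relMutation {u v : Fin n} (hu : isIsolated G u) (huv : u ≠ v) (w : Fin n) :
    cone (relMutation G v w) =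
      relMutation (relMutation (cone G) v.castSucc w.castSucc) v.castSucc u.castSucc := by
  have hu' (x : Fin n) : ¬ G.Adj x u := fun h => hu x h.symm
  ext a b
  cases a using Fin.lastCases <;> cases b using Fin.lastCases <;>
    simp [relMutation, hu _, hu', huv, (Fin.castSucc_ne_last _).symm] <;> grind

end cone

theorem stmt_7_general {n : ℕ} (G : SimpleGraph (Fin n)) (u v w : Fin n)
    (hu : isIsolated G u) (hvw : v ≠ w) (huv : u ≠ v) :
    (Xmat (relMutation G v w)).rank = (Xmat G).rank := by
  rw [Xmat_eq_adjMat_cone, Xmat_eq_adjMat_cone, cone_relMutation G hu huv,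
    rank_adjMat_relMutation _ ((Fin.castSucc_injective n).ne huv.symm),
    rank_adjMat_relMutation _ ((Fin.castSucc_injective n).ne hvw)]

/-- if `G` contains an isolated vertex `u` and `v ≠ w` are vertices with
`u ∉ {v, w}`, then relative mutation `μ_{v←w}` preserves the rank of `X(G)` over `F_2`. -/
theorem stmt_7 {n : ℕ} (G : SimpleGraph (Fin n)) (u v w : Fin n)
    (hu : isIsolated G u) (hvw : v ≠ w) (huv : u ≠ v) (huw : u ≠ w) :
    (Xmat (relMutation G v w)).rank = (Xmat G).rank :=
  stmt_7_general G u v w hu hvw huv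
end
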